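/- arXiv:2108.07876 — 2 statements merged into one kernel-verified Lean document; each statement's English description precedes it below -/
import Mathlib

section
/- For every x > 0, 2Φ(x) - 1 > √(2/π) · x · e^(-x²/2), where Φ is the standard normal cumulative distribution function. -/
open MeasureTheory Real Set

/-- The standard normal cumulative distribution function Φ. -/
noncomputable def stdNormalCDF (x : ℝ) : ℝ :=
  ∫ t in Set.Iic x, (Real.sqrt (2 * Real.pi))⁻¹ * Real.exp (-t ^ 2 / 2)

lemma gauss_eq : (fun t : ℝ => Real.exp (-t ^ 2 / 2)) =
    fun t : ℝ => Real.exp (-(1/2) * t ^ 2) := by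
  funext t; ring_nf

lemma gauss_integrable : Integrable (fun t : ℝ => Real.exp (-t ^ 2 / 2)) := by
  rw [gauss_eq]
  exact integrable_exp_neg_mul_sq (by norm_num)

lemma gauss_total : ∫ t : ℝ, Real.exp (-t ^ 2 / 2) = Real.sqrt (2 * Real.pi) := by
  rw [gauss_eq, integral_gaussian]
  rw [show Real.pi / (1/2) = 2 * Real.pi by ring]

lemma gauss_Iic_zero : ∫ t in Set.Iic (0:ℝ), Real.exp (-t ^ 2 / 2)
    = Real.sqrt (2 * Real.pi) / 2 := by
  have hsym : ∫ t in Set.Iic (0:ℝ), Real.exp (-t ^ 2 / 2)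
      = ∫ t in Set.Ioi (0:ℝ), Real.exp (-t ^ 2 / 2) := by
    rw [← neg_zero, ← integral_comp_neg_Iic]
    simp [neg_zero]
  have hsum := intervalIntegral.integral_Iic_add_Ioi (b := (0:ℝ))
    (gauss_integrable.integrableOn) (gauss_integrable.integrableOn)
  rw [gauss_total, ← hsym] at hsum
  linarith

theorem stmt_5 (x : ℝ) (hx : 0 < x) :
    Real.sqrt (2 / Real.pi) * x * Real.exp (-x ^ 2 / 2) < 2 * stdNormalCDF x - 1 := by
  set c := (Real.sqrt (2 * Real.pi))⁻¹ with hc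
  have hpi : (0:ℝ) < Real.sqrt (2 * Real.pi) := by
    positivity
  have key : ∫ t in (0:ℝ)..x, Real.exp (-x ^ 2 / 2) <
      ∫ t in (0:ℝ)..x, Real.exp (-t ^ 2 / 2) := by
    apply intervalIntegral.integral_lt_integral_of_continuousOn_of_le_of_exists_lt hx
      continuousOn_const (by fun_prop)
    · intro t ht
      apply Real.exp_le_exp.2
      have h1 : t ^ 2 ≤ x ^ 2 := by nlinarith [ht.1, ht.2]
      linarith
    · refine ⟨x/2, ⟨by linarith, by linarith⟩, Real.exp_lt_exp.2 ?_⟩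
      nlinarith
  have hconst : ∫ t in (0:ℝ)..x, Real.exp (-x ^ 2 / 2) = x * Real.exp (-x ^ 2 / 2) := by
    simp
  have hdiff : stdNormalCDF x - stdNormalCDF 0 = c * ∫ t in (0:ℝ)..x, Real.exp (-t ^ 2 / 2) := by
    unfold stdNormalCDF
    rw [← intervalIntegral.integral_const_mul]
    exact intervalIntegral.integral_Iic_sub_Iic
      ((gauss_integrable.integrableOn).const_mul c)
      ((gauss_integrable.integrableOn).const_mul c)
  have h0 : stdNormalCDF 0 = 1/2 := by
    unfold stdNormalCDF
    rw [MeasureTheory.integral_const_mul, gauss_Iic_zero,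
      ← mul_div_assoc, inv_mul_cancel₀ (by positivity : Real.sqrt (2*Real.pi) ≠ 0)]
  have hmul : Real.sqrt (2 / Real.pi) * Real.sqrt (2 * Real.pi) = 2 := by
    rw [← Real.sqrt_mul (by positivity),
      show (2/Real.pi)*(2*Real.pi) = 4 by field_simp; ring,
      show (4:ℝ) = 2^2 by norm_num, Real.sqrt_sq (by norm_num)]
  have hsqrt : Real.sqrt (2 / Real.pi) = 2 * c := by
    conv_rhs => rw [← hmul]
    rw [hc, mul_assoc, mul_inv_cancel₀ hpi.ne', mul_one]
  have hc0 : 0 < c := by rw [hc]; positivity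
  have := mul_lt_mul_of_pos_left key hc0
  rw [hconst] at this
  rw [hsqrt]
  have : 2 * c * (x * Real.exp (-x ^ 2 / 2)) < 2 * (stdNormalCDF x - stdNormalCDF 0) := by
    rw [hdiff]; linarith
  rw [h0] at this
  linarith [this]
end

section
/- Let p : (0, ∞) → ℝ be p(x) = 2(1 - Φ(x)) and let g(x) = c · x^(1/α) · e^(x²/(2α)) for constants c > 0 and 0 < α < 2. If a distribution function F satisfies 1 - F(y) ≥ K y^(-α) for all y ≥ y₀ (some K, y₀ > 0) with K c^(-α) = √(2/π), then there exists x₀ such that for all x ≥ x₀, p(x) ≤ 1 - F(g(x)). -/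
/-!
Mills' ratio bounds the two-sided Gaussian p-value by `√(2/π) x⁻¹ e^{-x²/2}`, while the choice of
`g` makes the power-law lower bound on the tail of `F` at `g x` equal to exactly that quantity:
`K (g x)^(-α) = K c^(-α) x⁻¹ e^{-x²/2}`. Since `g x → ∞`, the tail bound applies for large `x`.
-/

open Real MeasureTheory Filter Set Topology

lemma integral_Ioi_mul_exp_neg_mul_sq {b : ℝ} (hb : 0 < b) (x : ℝ) :
    ∫ t in Ioi x, t * exp (-b * t ^ 2) = exp (-b * x ^ 2) / (2 * b) := by
  have hderiv : ∀ t ∈ Ici x,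
      HasDerivAt (fun s => -exp (-b * s ^ 2) / (2 * b)) (t * exp (-b * t ^ 2)) t := by
    intro t _
    refine ((((hasDerivAt_pow 2 t).const_mul (-b)).exp.neg).div_const (2 * b)).congr_deriv ?_
    field_simp
    ring
  have hlim : Tendsto (fun s => -exp (-b * s ^ 2) / (2 * b)) atTop (𝓝 0) := by
    simpa using ((tendsto_exp_atBot.comp ((tendsto_pow_atTop two_ne_zero).const_mul_atTop_of_neg
      (neg_lt_zero.2 hb))).neg.div_const (2 * b))
  rw [integral_Ioi_of_hasDerivAt_of_tendsto' hderiv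
    (integrable_mul_exp_neg_mul_sq hb).integrableOn hlim]
  ring

lemma exp_neg_sq_div_two (t : ℝ) : exp (-t ^ 2 / 2) = exp (-(1 / 2) * t ^ 2) := by
  ring_nf

lemma integrable_stdNormalPDF :
    Integrable fun t : ℝ => (√(2 * π))⁻¹ * exp (-t ^ 2 / 2) := by
  simp only [exp_neg_sq_div_two]
  exact (integrable_exp_neg_mul_sq (by norm_num)).const_mul _

lemma integral_stdNormalPDF : ∫ t : ℝ, (√(2 * π))⁻¹ * exp (-t ^ 2 / 2) = 1 := by
  simp only [exp_neg_sq_div_two]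
  rw [integral_const_mul, integral_gaussian, show π / (1 / 2) = 2 * π by ring]
  exact inv_mul_cancel₀ (by positivity)

lemma one_sub_stdNormalCDF (x : ℝ) :
    1 - stdNormalCDF x = ∫ t in Ioi x, (√(2 * π))⁻¹ * exp (-t ^ 2 / 2) := by
  rw [← integral_stdNormalPDF, ← intervalIntegral.integral_Iic_add_Ioi
    integrable_stdNormalPDF.integrableOn integrable_stdNormalPDF.integrableOn, stdNormalCDF]
  ring

lemma one_sub_stdNormalCDF_le {x : ℝ} (hx : 0 < x) :
    1 - stdNormalCDF x ≤ (√(2 * π))⁻¹ * (x⁻¹ * exp (-x ^ 2 / 2)) := by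
  rw [one_sub_stdNormalCDF]
  calc ∫ t in Ioi x, (√(2 * π))⁻¹ * exp (-t ^ 2 / 2)
      ≤ ∫ t in Ioi x, ((√(2 * π))⁻¹ * x⁻¹) * (t * exp (-(1 / 2) * t ^ 2)) := by
        refine setIntegral_mono_on integrable_stdNormalPDF.integrableOn
          (((integrable_mul_exp_neg_mul_sq (by norm_num)).integrableOn).const_mul _)
          measurableSet_Ioi fun t (ht : x < t) => ?_
        have h1 : 1 ≤ x⁻¹ * t := by rw [inv_mul_eq_div, one_le_div hx]; exact ht.le
        rw [exp_neg_sq_div_two]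
        nlinarith [mul_nonneg (inv_nonneg.2 (sqrt_nonneg (2 * π))) (exp_pos (-(1 / 2) * t ^ 2)).le]
    _ = (√(2 * π))⁻¹ * (x⁻¹ * exp (-x ^ 2 / 2)) := by
        rw [integral_const_mul, integral_Ioi_mul_exp_neg_mul_sq (by norm_num), exp_neg_sq_div_two]
        ring

lemma two_mul_one_sub_stdNormalCDF_le {x : ℝ} (hx : 0 < x) :
    2 * (1 - stdNormalCDF x) ≤ √(2 / π) * (x⁻¹ * exp (-x ^ 2 / 2)) := by
  have hconst : 2 * (√(2 * π))⁻¹ = √(2 / π) := by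
    rw [← sqrt_inv, ← sqrt_mul_self zero_le_two, ← sqrt_mul (by positivity)]
    congr 1
    field_simp
    ring
  rw [← hconst, mul_assoc]
  exact mul_le_mul_of_nonneg_left (one_sub_stdNormalCDF_le hx) zero_le_two

lemma mul_rpow_one_div_mul_exp_rpow_neg {α c x : ℝ} (hα : α ≠ 0) (hc : 0 ≤ c) (hx : 0 ≤ x) :
    (c * x ^ (1 / α) * exp (x ^ 2 / (2 * α))) ^ (-α) = c ^ (-α) * (x⁻¹ * exp (-x ^ 2 / 2)) := by
  rw [mul_rpow (by positivity) (exp_pos _).le, mul_rpow hc (by positivity), ← rpow_mul hx,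
    ← exp_mul, one_div_mul_eq_div, neg_div_self hα, rpow_neg_one, mul_assoc]
  congr 3
  field_simp

lemma tendsto_mul_rpow_one_div_mul_exp_atTop {α c : ℝ} (hα : 0 < α) (hc : 0 < c) :
    Tendsto (fun x : ℝ => c * x ^ (1 / α) * exp (x ^ 2 / (2 * α))) atTop atTop := by
  have hexp : Tendsto (fun x : ℝ => exp (x ^ 2 / (2 * α))) atTop atTop :=
    tendsto_exp_atTop.comp ((tendsto_pow_atTop two_ne_zero).atTop_div_const (by positivity))
  simpa only [mul_assoc] using
    ((tendsto_rpow_atTop (by positivity)).atTop_mul_atTop₀ hexp).const_mul_atTop hc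

theorem stmt_13_general (α c K y₀ : ℝ) (hα0 : 0 < α) (hc : 0 < c)
    (F : ℝ → ℝ) (hF : ∀ y, y₀ ≤ y → K * y ^ (-α) ≤ 1 - F y)
    (hKc : K * c ^ (-α) = Real.sqrt (2 / Real.pi)) :
    ∃ x₀ : ℝ, ∀ x, x₀ ≤ x →
      2 * (1 - stdNormalCDF x) ≤ 1 - F (c * x ^ (1 / α) * Real.exp (x ^ 2 / (2 * α))) := by
  obtain ⟨x₀, hx₀⟩ := eventually_atTop.mp
    (((tendsto_mul_rpow_one_div_mul_exp_atTop hα0 hc).eventually_ge_atTop y₀).and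
      (eventually_gt_atTop 0))
  refine ⟨x₀, fun x hx => ?_⟩
  obtain ⟨hgy, hxpos⟩ := hx₀ x hx
  calc 2 * (1 - stdNormalCDF x) ≤ √(2 / π) * (x⁻¹ * exp (-x ^ 2 / 2)) :=
        two_mul_one_sub_stdNormalCDF_le hxpos
    _ = K * (c * x ^ (1 / α) * exp (x ^ 2 / (2 * α))) ^ (-α) := by
        rw [mul_rpow_one_div_mul_exp_rpow_neg hα0.ne' hc.le hxpos.le, ← hKc, mul_assoc]
    _ ≤ _ := hF _ hgy

theorem stmt_13 (α c K y₀ : ℝ) (hα0 : 0 < α) (hα2 : α < 2) (hc : 0 < c)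
    (hK : 0 < K) (hy₀ : 0 < y₀)
    (F : ℝ → ℝ) (hF : ∀ y, y₀ ≤ y → K * y ^ (-α) ≤ 1 - F y)
    (hKc : K * c ^ (-α) = Real.sqrt (2 / Real.pi)) :
    ∃ x₀ : ℝ, ∀ x, x₀ ≤ x →
      2 * (1 - stdNormalCDF x) ≤ 1 - F (c * x ^ (1 / α) * Real.exp (x ^ 2 / (2 * α))) :=
  stmt_13_general α c K y₀ hα0 hc F hF hKc
end
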